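/- Let $\nu \in L^1_{loc}(\mathbb{R}^n)$, $\nu \ge 0$, and let $Q \subset \mathbb{R}^n$ be a cube with $\fint_Q \nu = 1$. Fix $\Lambda > 1$ and let $\{Q_j\}_j$ be the maximal dyadic subcubes of $Q$ such that either (a) $\fint_{Q_j} \nu > \Lambda$, or (b) $\fint_{Q_j} \nu < \Lambda^{-1}$. Then: (i) the cubes of type (a) satisfy $\sum_{(a)} |Q_j| \le \Lambda^{-1} |Q|$; (ii) the cubes of type (b) satisfy $\sum_{(b)} \nu(Q_j) \le \Lambda^{-1} \nu(Q)$; (iii) for every point $(x,t)$ in the sawtooth region $E_Q := (Q \times (0,\ell(Q))) \setminus \bigcup_j (Q_j \times (0, \ell(Q_j)))$, with $x$ not belonging to any $Q_j$ or with $t \ge \ell(Q_j)$ for the $Q_j$ containing $x$, the dyadic cube $Q' \in \mathbb{D}(Q)$ containing $x$ of side length comparable to $t$ that is not strictly contained in any $Q_j$ satisfies $\Lambda^{-1} \le \fint_{Q'} \nu \le \Lambda$. -/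

import Mathlib

open MeasureTheory ENNReal

/-- The dyadic subcube of generation `k` and index `m` of the half-open cube
with corner `c` and side length `ℓ`. -/
def dySub (n : ℕ) (c : Fin n → ℝ) (ℓ : ℝ) (k : ℕ) (m : Fin n → ℕ) :
    Set (Fin n → ℝ) :=
  {y | ∀ i, c i + ℓ * (m i : ℝ) / 2 ^ k ≤ y i ∧ y i < c i + ℓ * ((m i : ℝ) + 1) / 2 ^ k}

/-!
Each stopping cube of type (a) carries `ν`-mass at least `Λ` times its volume, and each cube of
type (b) carries `ν`-mass at most `Λ⁻¹` times its volume. The stopping cubes are pairwise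
disjoint, so summing these bounds over them compares the volume of the union of the type (a)
cubes with `ν(Q) = |Q|`, and the `ν`-mass of the union of the type (b) cubes with `|Q| = ν(Q)`.
A dyadic cube that lies in no stopping cube cannot itself satisfy (a) or (b), by maximality.
-/

section DisjointUnions

variable {α ι : Type*} [MeasurableSpace α] {μ : Measure α} {f : α → ℝ} {s : ι → Set α}
  {S : Set ι} {t : Set α}

theorem measure_biUnion_le_of_forall_le [Countable ι] {μ₁ μ₂ : Measure α}
    (hd : S.PairwiseDisjoint s) (hm : ∀ i ∈ S, MeasurableSet (s i))
    (h : ∀ i ∈ S, μ₁ (s i) ≤ μ₂ (s i)) :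
    μ₁ (⋃ i ∈ S, s i) ≤ μ₂ (⋃ i ∈ S, s i) := by
  rw [measure_biUnion S.to_countable hd hm, measure_biUnion S.to_countable hd hm]
  exact ENNReal.tsum_le_tsum fun i => h i i.2

theorem ofReal_mul_measure_le_setLIntegral {u : Set α} {c : ℝ} (hu : μ u ≠ ∞)
    (hf : IntegrableOn f u μ) (hf0 : 0 ≤ᵐ[μ.restrict u] f) (h : c ≤ ⨍ x in u, f x ∂μ) :
    ENNReal.ofReal c * μ u ≤ ∫⁻ x in u, ENNReal.ofReal (f x) ∂μ := by
  rw [← ofReal_integral_eq_lintegral_ofReal hf hf0, ← measure_smul_setAverage f hu,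
    ← ofReal_measureReal hu, ← ENNReal.ofReal_mul' measureReal_nonneg, smul_eq_mul, mul_comm]
  exact ENNReal.ofReal_le_ofReal (mul_le_mul_of_nonneg_left h measureReal_nonneg)

theorem setLIntegral_le_ofReal_mul_measure {u : Set α} {c : ℝ} (hu : μ u ≠ ∞)
    (hf : IntegrableOn f u μ) (hf0 : 0 ≤ᵐ[μ.restrict u] f) (h : ⨍ x in u, f x ∂μ ≤ c) :
    ∫⁻ x in u, ENNReal.ofReal (f x) ∂μ ≤ ENNReal.ofReal c * μ u := by
  rw [← ofReal_integral_eq_lintegral_ofReal hf hf0, ← measure_smul_setAverage f hu,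
    ← ofReal_measureReal hu, ← ENNReal.ofReal_mul' measureReal_nonneg, smul_eq_mul, mul_comm]
  exact ENNReal.ofReal_le_ofReal (mul_le_mul_of_nonneg_right h measureReal_nonneg)

variable [Countable ι]

theorem measureReal_biUnion_le_of_le_setAverage (ht : μ t ≠ ∞) (hf : IntegrableOn f t μ)
    (hf0 : 0 ≤ᵐ[μ.restrict t] f) (hd : S.PairwiseDisjoint s)
    (hm : ∀ i ∈ S, MeasurableSet (s i)) (hst : ∀ i ∈ S, s i ⊆ t) {Λ : ℝ} (hΛ : 0 < Λ)
    (hbig : ∀ i ∈ S, Λ ≤ ⨍ x in s i, f x ∂μ) :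
    μ.real (⋃ i ∈ S, s i) ≤ Λ⁻¹ * ∫ x in t, f x ∂μ := by
  have hUt : ⋃ i ∈ S, s i ⊆ t := Set.iUnion₂_subset hst
  have hUfin : μ (⋃ i ∈ S, s i) ≠ ∞ := ne_top_of_le_ne_top ht (measure_mono hUt)
  have hmass : ENNReal.ofReal Λ * μ (⋃ i ∈ S, s i) ≤ ENNReal.ofReal (∫ x in t, f x ∂μ) :=
    calc ENNReal.ofReal Λ * μ (⋃ i ∈ S, s i)
        = (ENNReal.ofReal Λ • μ) (⋃ i ∈ S, s i) := rfl
      _ ≤ μ.withDensity (fun x => ENNReal.ofReal (f x)) (⋃ i ∈ S, s i) := by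
        refine measure_biUnion_le_of_forall_le hd hm fun i hi => ?_
        rw [Measure.smul_apply, smul_eq_mul, withDensity_apply _ (hm i hi)]
        exact ofReal_mul_measure_le_setLIntegral (ne_top_of_le_ne_top ht
          (measure_mono (hst i hi))) (hf.mono_set (hst i hi))
          (ae_restrict_of_ae_restrict_of_subset (hst i hi) hf0) (hbig i hi)
      _ = ∫⁻ x in ⋃ i ∈ S, s i, ENNReal.ofReal (f x) ∂μ :=
        withDensity_apply _ (MeasurableSet.biUnion S.to_countable hm)
      _ ≤ ∫⁻ x in t, ENNReal.ofReal (f x) ∂μ := lintegral_mono_set hUt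
      _ = ENNReal.ofReal (∫ x in t, f x ∂μ) := (ofReal_integral_eq_lintegral_ofReal hf hf0).symm
  rw [← ofReal_measureReal hUfin, ← ENNReal.ofReal_mul hΛ.le,
    ENNReal.ofReal_le_ofReal_iff (integral_nonneg_of_ae hf0)] at hmass
  exact (le_inv_mul_iff₀ hΛ).2 hmass

theorem setIntegral_biUnion_le_of_setAverage_le (ht : μ t ≠ ∞) (hf : IntegrableOn f t μ)
    (hf0 : 0 ≤ᵐ[μ.restrict t] f) (hd : S.PairwiseDisjoint s)
    (hm : ∀ i ∈ S, MeasurableSet (s i)) (hst : ∀ i ∈ S, s i ⊆ t) {c : ℝ} (hc : 0 ≤ c)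
    (hsmall : ∀ i ∈ S, ⨍ x in s i, f x ∂μ ≤ c) :
    ∫ x in ⋃ i ∈ S, s i, f x ∂μ ≤ c * μ.real t := by
  have hUt : ⋃ i ∈ S, s i ⊆ t := Set.iUnion₂_subset hst
  have hmass : ENNReal.ofReal (∫ x in ⋃ i ∈ S, s i, f x ∂μ) ≤ ENNReal.ofReal (c * μ.real t) :=
    calc ENNReal.ofReal (∫ x in ⋃ i ∈ S, s i, f x ∂μ)
        = ∫⁻ x in ⋃ i ∈ S, s i, ENNReal.ofReal (f x) ∂μ :=
        ofReal_integral_eq_lintegral_ofReal (hf.mono_set hUt)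
          (ae_restrict_of_ae_restrict_of_subset hUt hf0)
      _ = μ.withDensity (fun x => ENNReal.ofReal (f x)) (⋃ i ∈ S, s i) :=
        (withDensity_apply _ (MeasurableSet.biUnion S.to_countable hm)).symm
      _ ≤ (ENNReal.ofReal c • μ) (⋃ i ∈ S, s i) := by
        refine measure_biUnion_le_of_forall_le hd hm fun i hi => ?_
        rw [Measure.smul_apply, smul_eq_mul, withDensity_apply _ (hm i hi)]
        exact setLIntegral_le_ofReal_mul_measure (ne_top_of_le_ne_top ht
          (measure_mono (hst i hi))) (hf.mono_set (hst i hi))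
          (ae_restrict_of_ae_restrict_of_subset (hst i hi) hf0) (hsmall i hi)
      _ ≤ (ENNReal.ofReal c • μ) t := measure_mono hUt
      _ = ENNReal.ofReal (c * μ.real t) := by
        rw [Measure.smul_apply, smul_eq_mul, ENNReal.ofReal_mul hc, ofReal_measureReal ht]
  exact (ENNReal.ofReal_le_ofReal_iff (mul_nonneg hc measureReal_nonneg)).1 hmass

end DisjointUnions

section DyadicCubes

variable {n : ℕ} (c : Fin n → ℝ)

theorem dySub_eq_pi (ℓ : ℝ) (k : ℕ) (m : Fin n → ℕ) :
    dySub n c ℓ k m = Set.univ.pi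
      fun i => Set.Ico (c i + ℓ * (m i : ℝ) / 2 ^ k) (c i + ℓ * ((m i : ℝ) + 1) / 2 ^ k) := by
  ext y
  simp [dySub, Set.mem_pi]

theorem measurableSet_dySub (ℓ : ℝ) (k : ℕ) (m : Fin n → ℕ) :
    MeasurableSet (dySub n c ℓ k m) := by
  rw [dySub_eq_pi]
  exact MeasurableSet.univ_pi fun _ => measurableSet_Ico

theorem volume_dySub {ℓ : ℝ} (hℓ : 0 ≤ ℓ) (k : ℕ) (m : Fin n → ℕ) :
    volume (dySub n c ℓ k m) = ENNReal.ofReal ((ℓ / 2 ^ k) ^ n) := by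
  have hside : ∀ i, c i + ℓ * ((m i : ℝ) + 1) / 2 ^ k - (c i + ℓ * (m i : ℝ) / 2 ^ k) =
      ℓ / 2 ^ k := fun i => by ring
  rw [dySub_eq_pi, volume_pi_pi, ENNReal.ofReal_pow (by positivity)]
  simp [Real.volume_Ico, hside]

theorem dySub_subset_dySub_zero {ℓ : ℝ} (hℓ : 0 ≤ ℓ) {k : ℕ} {m : Fin n → ℕ}
    (hm : ∀ i, m i < 2 ^ k) :
    dySub n c ℓ k m ⊆ dySub n c ℓ 0 fun _ => 0 := by
  intro y hy i
  have h2k : (0 : ℝ) < 2 ^ k := by positivity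
  have hmk : (m i : ℝ) + 1 ≤ 2 ^ k := by exact_mod_cast hm i
  have hlo : 0 ≤ ℓ * (m i : ℝ) / 2 ^ k := by positivity
  have hhi : ℓ * ((m i : ℝ) + 1) / 2 ^ k ≤ ℓ := by
    rw [div_le_iff₀ h2k]
    exact mul_le_mul_of_nonneg_left hmk hℓ
  simp only [Nat.cast_zero, pow_zero, mul_zero, add_zero, zero_add, mul_one, div_one]
  exact ⟨by linarith [(hy i).1], by linarith [(hy i).2]⟩

end DyadicCubes

theorem stmt_19_general (n : ℕ) (c : Fin n → ℝ) (ℓ : ℝ) (hℓ : 0 < ℓ)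
    (ν : (Fin n → ℝ) → ℝ) (hνnn : ∀ x, 0 ≤ ν x)
    (hνint : IntegrableOn ν (dySub n c ℓ 0 fun _ => 0))
    (hnorm : (⨍ x in dySub n c ℓ 0 fun _ => 0, ν x) = 1)
    (Λ : ℝ) (hΛ : 1 < Λ)
    (sel : Set (ℕ × (Fin n → ℕ)))
    (hvalid : ∀ j ∈ sel, ∀ i, j.2 i < 2 ^ j.1)
    (hdisj : sel.Pairwise fun j j' =>
      Disjoint (dySub n c ℓ j.1 j.2) (dySub n c ℓ j'.1 j'.2))
    (hmax : ∀ (k : ℕ) (m : Fin n → ℕ), (∀ i, m i < 2 ^ k) →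
      (Λ < (⨍ x in dySub n c ℓ k m, ν x) ∨ (⨍ x in dySub n c ℓ k m, ν x) < Λ⁻¹) →
      ∃ j ∈ sel, dySub n c ℓ k m ⊆ dySub n c ℓ j.1 j.2) :
    (volume (⋃ j ∈ {j ∈ sel | Λ < ⨍ x in dySub n c ℓ j.1 j.2, ν x},
        dySub n c ℓ j.1 j.2)).toReal ≤ Λ⁻¹ * ℓ ^ n ∧
    (∫ x in ⋃ j ∈ {j ∈ sel | (⨍ x in dySub n c ℓ j.1 j.2, ν x) < Λ⁻¹},
        dySub n c ℓ j.1 j.2, ν x) ≤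
      Λ⁻¹ * ∫ x in dySub n c ℓ 0 fun _ => 0, ν x ∧
    ∀ (k : ℕ) (m : Fin n → ℕ), (∀ i, m i < 2 ^ k) →
      (∀ j ∈ sel, ¬dySub n c ℓ k m ⊆ dySub n c ℓ j.1 j.2) →
      Λ⁻¹ ≤ (⨍ x in dySub n c ℓ k m, ν x) ∧ (⨍ x in dySub n c ℓ k m, ν x) ≤ Λ := by
  set Q := dySub n c ℓ 0 fun _ => 0
  have hΛ0 : 0 < Λ := one_pos.trans hΛ
  have hQvol : volume Q = ENNReal.ofReal (ℓ ^ n) := by simp [Q, volume_dySub c hℓ.le]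
  have hQfin : volume Q ≠ ∞ := hQvol ▸ ENNReal.ofReal_ne_top
  have hQreal : volume.real Q = ℓ ^ n := by
    rw [measureReal_def, hQvol, ENNReal.toReal_ofReal (by positivity)]
  have hmassQ : ∫ x in Q, ν x = volume.real Q := by
    rw [← measure_smul_setAverage ν hQfin, hnorm, smul_eq_mul, mul_one]
  have hν0 : 0 ≤ᵐ[volume.restrict Q] ν := ae_of_all _ hνnn
  have hsub : ∀ j ∈ sel, dySub n c ℓ j.1 j.2 ⊆ Q := fun j hj =>
    dySub_subset_dySub_zero c hℓ.le (hvalid j hj)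
  have hmeas : ∀ j ∈ sel, MeasurableSet (dySub n c ℓ j.1 j.2) := fun j _ =>
    measurableSet_dySub c ℓ j.1 j.2
  refine ⟨?_, ?_, ?_⟩
  · rw [← hQreal, ← hmassQ]
    exact measureReal_biUnion_le_of_le_setAverage hQfin hνint hν0
      (hdisj.mono (Set.sep_subset _ _)) (fun j hj => hmeas j hj.1) (fun j hj => hsub j hj.1)
      hΛ0 fun j hj => hj.2.le
  · rw [hmassQ]
    exact setIntegral_biUnion_le_of_setAverage_le hQfin hνint hν0
      (hdisj.mono (Set.sep_subset _ _)) (fun j hj => hmeas j hj.1) (fun j hj => hsub j hj.1)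
      (inv_nonneg.2 hΛ0.le) fun j hj => hj.2.le
  · intro k m hm hfree
    by_contra hout
    rw [not_and_or, not_le, not_le] at hout
    obtain ⟨j, hj, hsubj⟩ := hmax k m hm hout.symm
    exact hfree j hj hsubj

/-- The stopping-time construction for a weight `ν` with `⨍_Q ν = 1`:
the maximal dyadic subcubes where the average exceeds `Λ` have small total
Lebesgue measure, those where it drops below `Λ⁻¹` have small total `ν`-mass,
and every dyadic subcube not contained in a stopping cube has average between
`Λ⁻¹` and `Λ`. -/
theorem stmt_19 (n : ℕ) (hn : 0 < n) (c : Fin n → ℝ) (ℓ : ℝ) (hℓ : 0 < ℓ)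
    (ν : (Fin n → ℝ) → ℝ) (hνmeas : Measurable ν) (hνnn : ∀ x, 0 ≤ ν x)
    (hνint : IntegrableOn ν (dySub n c ℓ 0 fun _ => 0))
    (hnorm : (⨍ x in dySub n c ℓ 0 fun _ => 0, ν x) = 1)
    (Λ : ℝ) (hΛ : 1 < Λ)
    (sel : Set (ℕ × (Fin n → ℕ)))
    (hvalid : ∀ j ∈ sel, ∀ i, j.2 i < 2 ^ j.1)
    (hdisj : sel.Pairwise fun j j' =>
      Disjoint (dySub n c ℓ j.1 j.2) (dySub n c ℓ j'.1 j'.2))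
    (hstop : ∀ j ∈ sel,
      Λ < (⨍ x in dySub n c ℓ j.1 j.2, ν x) ∨ (⨍ x in dySub n c ℓ j.1 j.2, ν x) < Λ⁻¹)
    (hmax : ∀ (k : ℕ) (m : Fin n → ℕ), (∀ i, m i < 2 ^ k) →
      (Λ < (⨍ x in dySub n c ℓ k m, ν x) ∨ (⨍ x in dySub n c ℓ k m, ν x) < Λ⁻¹) →
      ∃ j ∈ sel, dySub n c ℓ k m ⊆ dySub n c ℓ j.1 j.2) :
    (volume (⋃ j ∈ {j ∈ sel | Λ < ⨍ x in dySub n c ℓ j.1 j.2, ν x},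
        dySub n c ℓ j.1 j.2)).toReal ≤ Λ⁻¹ * ℓ ^ n ∧
    (∫ x in ⋃ j ∈ {j ∈ sel | (⨍ x in dySub n c ℓ j.1 j.2, ν x) < Λ⁻¹},
        dySub n c ℓ j.1 j.2, ν x) ≤
      Λ⁻¹ * ∫ x in dySub n c ℓ 0 fun _ => 0, ν x ∧
    ∀ (k : ℕ) (m : Fin n → ℕ), (∀ i, m i < 2 ^ k) →
      (∀ j ∈ sel, ¬dySub n c ℓ k m ⊆ dySub n c ℓ j.1 j.2) →
      Λ⁻¹ ≤ (⨍ x in dySub n c ℓ k m, ν x) ∧ (⨍ x in dySub n c ℓ k m, ν x) ≤ Λ :=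
  stmt_19_general n c ℓ hℓ ν hνnn hνint hnorm Λ hΛ sel hvalid hdisj hmax
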